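/- arXiv:2510.25599 — 5 statements merged into one kernel-verified Lean document; each statement's English description precedes it below -/
import Mathlib

section
/- For a strictly proper scoring rule S, if the BMA epistemic uncertainty EU(Q) = E_{P∼Q}[D(P̄, P)] equals zero, then Q is a Dirac measure δ_P for some first-order distribution P. -/
open MeasureTheory

/-- For a strictly proper scoring rule S, if the BMA epistemic uncertainty
EU(Q) = E_{P∼Q}[D(P̄,P)] equals zero, then Q is a Dirac measure. -/
theorem dirac_of_eu_bma_eq_zero
    {α : Type*} [MeasurableSpace α] [MeasurableSingletonClass α]
    (S : α → α → ℝ)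
    (hproper : ∀ P Q, S Q Q ≤ S P Q)
    (hstrict : ∀ P Q, S P Q = S Q Q → P = Q)
    (Q : Measure α) [IsProbabilityMeasure Q] (Pbar : α)
    (hint : Integrable (fun p => S Pbar p - S p p) Q)
    (hEU : ∫ p, (S Pbar p - S p p) ∂Q = 0) :
    ∃ P : α, Q = Measure.dirac P := by
  have hnn : 0 ≤ᵐ[Q] fun p => S Pbar p - S p p :=
    Filter.Eventually.of_forall fun p => sub_nonneg.2 (hproper Pbar p)
  have h0 : (fun p => S Pbar p - S p p) =ᵐ[Q] 0 :=
    (integral_eq_zero_iff_of_nonneg_ae hnn hint).mp hEU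
  have hae : ∀ᵐ p ∂Q, p = Pbar := by
    filter_upwards [h0] with p hp
    exact (hstrict Pbar p (by linarith [sub_eq_zero.mp hp])).symm
  refine ⟨Pbar, ?_⟩
  ext s hs
  by_cases hmem : Pbar ∈ s
  · have : Q sᶜ = 0 := by
      refine measure_mono_null ?_ hae
      intro p hp hpe
      exact hp (hpe ▸ hmem)
    rw [Measure.dirac_apply' _ hs, Set.indicator_of_mem hmem]
    have h2 := measure_add_measure_compl (μ := Q) hs
    rw [this, add_zero, measure_univ] at h2
    simp [h2]
  · have : Q s = 0 := by
      refine measure_mono_null ?_ hae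
      intro p hp hpe
      exact hmem (hpe ▸ hp)
    rw [Measure.dirac_apply' _ hs, Set.indicator_of_notMem hmem, this]
end

section
/- If the kernel k satisfies 0 ≤ k(x,y) ≤ C for all x, y and AU(Q) = E_Q[H_k(P_θ)] is finite, then the influence function IF(θ₀; AU, Q) = H_k(P_{θ₀}) − E_Q[H_k(P_ϑ)] is bounded by a finite constant uniformly in θ₀, i.e., the aleatoric uncertainty measure of a bounded kernel score is robust. -/
open MeasureTheory

private lemma integral_mem_bounds {α : Type*} [MeasurableSpace α]
    (μ : Measure α) [IsProbabilityMeasure μ] (f : α → ℝ) (C' : ℝ) (hC' : 0 ≤ C')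
    (h0 : ∀ x, 0 ≤ f x) (h1 : ∀ x, f x ≤ C') :
    0 ≤ ∫ x, f x ∂μ ∧ ∫ x, f x ∂μ ≤ C' := by
  by_cases hf : Integrable f μ
  · refine ⟨integral_nonneg h0, ?_⟩
    calc ∫ x, f x ∂μ ≤ ∫ _x, C' ∂μ := integral_mono hf (integrable_const C') h1
    _ = C' := by simp
  · rw [integral_undef hf]; exact ⟨le_refl 0, hC'⟩

/-- If the kernel k satisfies 0 ≤ k ≤ C and AU(Q) = E_Q[H_k(P_θ)] is finite, then
the influence function IF(θ₀; AU, Q) = H_k(P_{θ₀}) − E_Q[H_k(P_ϑ)] is bounded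
uniformly in θ₀: the aleatoric uncertainty of a bounded kernel score is robust. -/
theorem bounded_kernel_influence_function_bounded
    {Θ Y : Type*} [MeasurableSpace Θ] [MeasurableSpace Y]
    (P : Θ → Measure Y) (hP : ∀ θ, IsProbabilityMeasure (P θ))
    (k : Y → Y → ℝ) (C : ℝ)
    (hk0 : ∀ x y, 0 ≤ k x y) (hkC : ∀ x y, k x y ≤ C)
    (Q : Measure Θ) [IsProbabilityMeasure Q]
    (H : Θ → ℝ)
    (hH : ∀ θ, H θ =
      (1/2) * (∫ x, ∫ x', k x x' ∂(P θ) ∂(P θ)) - (1/2) * ∫ x, k x x ∂(P θ))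
    (hint : Integrable H Q) :
    ∃ B : ℝ, ∀ θ₀ : Θ, |H θ₀ - ∫ θ, H θ ∂Q| ≤ B := by
  set C' := max C 0 with hC'def
  have hC' : 0 ≤ C' := le_max_right _ _
  have hkC' : ∀ x y, k x y ≤ C' := fun x y => (hkC x y).trans (le_max_left _ _)
  -- pointwise bound on H
  have hHb : ∀ θ, |H θ| ≤ C' / 2 := by
    intro θ
    haveI := hP θ
    have hinner : ∀ x, 0 ≤ (∫ x', k x x' ∂(P θ)) ∧ (∫ x', k x x' ∂(P θ)) ≤ C' :=
      fun x => integral_mem_bounds (P θ) _ C' hC' (hk0 x) (hkC' x)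
    have houter : 0 ≤ (∫ x, ∫ x', k x x' ∂(P θ) ∂(P θ)) ∧
        (∫ x, ∫ x', k x x' ∂(P θ) ∂(P θ)) ≤ C' :=
      integral_mem_bounds (P θ) _ C' hC' (fun x => (hinner x).1) (fun x => (hinner x).2)
    have hdiag : 0 ≤ (∫ x, k x x ∂(P θ)) ∧ (∫ x, k x x ∂(P θ)) ≤ C' :=
      integral_mem_bounds (P θ) _ C' hC' (fun x => hk0 x x) (fun x => hkC' x x)
    rw [hH θ, abs_le]
    constructor <;> nlinarith [houter.1, houter.2, hdiag.1, hdiag.2]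
  -- bound on the integral of H
  have hIb : |∫ θ, H θ ∂Q| ≤ C' / 2 := by
    calc |∫ θ, H θ ∂Q| ≤ ∫ θ, |H θ| ∂Q := norm_integral_le_integral_norm H
    _ ≤ ∫ _θ, C' / 2 ∂Q := integral_mono hint.abs (integrable_const _) hHb
    _ = C' / 2 := by simp
  exact ⟨C', fun θ₀ => by
    have := hHb θ₀
    calc |H θ₀ - ∫ θ, H θ ∂Q| ≤ |H θ₀| + |∫ θ, H θ ∂Q| := abs_sub _ _
    _ ≤ C' / 2 + C' / 2 := add_le_add this hIb
    _ = C' := by ring⟩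
end

section
/- If P₁ ≤_cx P₂ (convex order) and k(x,x') = ψ(x−x') is a translation-invariant kernel with ψ convex, then the kernel score entropies satisfy H_k(P₁) ≤ H_k(P₂), i.e., AU(δ_{P₁}) ≤ AU(δ_{P₂}). -/
open MeasureTheory

private lemma convexOn_sub_left {E : Type*} [NormedAddCommGroup E] [NormedSpace ℝ E]
    {ψ : E → ℝ} (hψ : ConvexOn ℝ Set.univ ψ) (x : E) :
    ConvexOn ℝ Set.univ (fun x' => ψ (x - x')) := by
  refine ⟨convex_univ, fun a _ b _ ta tb hta htb hab => ?_⟩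
  have h : x - (ta • a + tb • b) = ta • (x - a) + tb • (x - b) := by
    have htb' : tb = 1 - ta := by linarith
    subst htb'
    module
  simp only []
  rw [h]
  exact hψ.2 (Set.mem_univ _) (Set.mem_univ _) hta htb hab

private lemma convexOn_sub_right {E : Type*} [NormedAddCommGroup E] [NormedSpace ℝ E]
    {ψ : E → ℝ} (hψ : ConvexOn ℝ Set.univ ψ) (x' : E) :
    ConvexOn ℝ Set.univ (fun x => ψ (x - x')) := by
  refine ⟨convex_univ, fun a _ b _ ta tb hta htb hab => ?_⟩
  have h : (ta • a + tb • b) - x' = ta • (a - x') + tb • (b - x') := by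
    have htb' : tb = 1 - ta := by linarith
    subst htb'
    module
  simp only []
  rw [h]
  exact hψ.2 (Set.mem_univ _) (Set.mem_univ _) hta htb hab

/-- If P₁ ≤_cx P₂ in the convex order and k(x,x') = ψ(x−x') is a translation-invariant
kernel with ψ convex, then the kernel-score entropies satisfy H_k(P₁) ≤ H_k(P₂),
where H_k(P) = (1/2)E_{X,X'∼P}[ψ(X−X')] − (1/2)ψ(0). -/
theorem kernel_entropy_mono_convex_order
    {E : Type*} [NormedAddCommGroup E] [NormedSpace ℝ E] [MeasurableSpace E]
    (P₁ P₂ : Measure E) [IsProbabilityMeasure P₁] [IsProbabilityMeasure P₂]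
    (ψ : E → ℝ) (hψ : ConvexOn ℝ Set.univ ψ)
    (hcx : ∀ φ : E → ℝ, ConvexOn ℝ Set.univ φ → Integrable φ P₁ → Integrable φ P₂ →
      ∫ x, φ x ∂P₁ ≤ ∫ x, φ x ∂P₂)
    (h11 : Integrable (fun z : E × E => ψ (z.1 - z.2)) (P₁.prod P₁))
    (h12 : Integrable (fun z : E × E => ψ (z.1 - z.2)) (P₁.prod P₂))
    (h22 : Integrable (fun z : E × E => ψ (z.1 - z.2)) (P₂.prod P₂)) :
    (1/2) * (∫ x, ∫ x', ψ (x - x') ∂P₁ ∂P₁) - (1/2) * ψ 0 ≤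
    (1/2) * (∫ x, ∫ x', ψ (x - x') ∂P₂ ∂P₂) - (1/2) * ψ 0 := by
  have step1 : ∫ x, ∫ x', ψ (x - x') ∂P₁ ∂P₁ ≤ ∫ x, ∫ x', ψ (x - x') ∂P₂ ∂P₁ := by
    refine integral_mono_ae h11.integral_prod_left h12.integral_prod_left ?_
    filter_upwards [h11.prod_right_ae, h12.prod_right_ae] with x hx1 hx2
    exact hcx _ (convexOn_sub_left hψ x) hx1 hx2
  have swap12 : ∫ x, ∫ x', ψ (x - x') ∂P₂ ∂P₁ = ∫ x', ∫ x, ψ (x - x') ∂P₁ ∂P₂ :=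
    integral_integral_swap (f := fun x x' => ψ (x - x')) h12
  have step2 : ∫ x', ∫ x, ψ (x - x') ∂P₁ ∂P₂ ≤ ∫ x', ∫ x, ψ (x - x') ∂P₂ ∂P₂ := by
    refine integral_mono_ae h12.integral_prod_right h22.integral_prod_right ?_
    filter_upwards [h12.prod_left_ae, h22.prod_left_ae] with x' hx1 hx2
    exact hcx _ (convexOn_sub_right hψ x') hx1 hx2
  have swap22 : ∫ x', ∫ x, ψ (x - x') ∂P₂ ∂P₂ = ∫ x, ∫ x', ψ (x - x') ∂P₂ ∂P₂ :=
    (integral_integral_swap (f := fun x x' => ψ (x - x')) h22).symm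
  have := step1.trans ((swap12.trans_le step2).trans_eq swap22)
  linarith
end

section
/- If P₁ ≤_cx P₂ in the convex order and P₂ has a log-concave density p₂, then the differential entropies satisfy H(P₁) ≤ H(P₂). -/
/-!
Since `-log p₂ = -φ` is convex, the convex order gives `E_{P₁}[-log p₂] ≤ E_{P₂}[-log p₂] = H(P₂)`,
and Gibbs' inequality `a (log b - log a) ≤ b - a` gives `H(P₁) ≤ E_{P₁}[-log p₂]`.

The density `p₁` is not assumed measurable, so `P₁` is really the measure with density a measurable
minorant `G ≤ p₁` having the same integral over every measurable set. Such a `G` exceeds `p₁ - δ`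
outside an inner-null set for every `δ > 0`; together with the a.e. measurability of `p₁ log p₁`
and the uniform continuity of `t ↦ t log t` on `[0, 1]` this gives `G log G ≤ p₁ log p₁` a.e.,
so Gibbs' inequality for `G` bounds the entropy written in terms of `p₁`.
-/

open MeasureTheory ENNReal Real Set

section Density

variable {α E : Type*} [MeasurableSpace α] {μ : Measure α}
  [NormedAddCommGroup E] [NormedSpace ℝ E]

theorem integral_withDensity_ofReal {G : α → ℝ} (hGm : Measurable G) (hG0 : 0 ≤ G) (f : α → E) :
    ∫ x, f x ∂μ.withDensity (fun x => ENNReal.ofReal (G x)) = ∫ x, G x • f x ∂μ := by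
  rw [integral_withDensity_eq_integral_toReal_smul hGm.ennreal_ofReal
    (ae_of_all _ fun _ => ofReal_lt_top)]
  simp only [toReal_ofReal (hG0 _)]

theorem integrable_withDensity_ofReal_iff {G : α → ℝ} (hGm : Measurable G) (hG0 : 0 ≤ G)
    {f : α → E} :
    Integrable f (μ.withDensity fun x => ENNReal.ofReal (G x)) ↔
      Integrable (fun x => G x • f x) μ := by
  rw [integrable_withDensity_iff_integrable_smul' hGm.ennreal_ofReal
    (ae_of_all _ fun _ => ofReal_lt_top)]
  simp only [toReal_ofReal (hG0 _)]

theorem integrable_of_isFiniteMeasure_withDensity_ofReal {G : α → ℝ} (hGm : Measurable G)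
    (hG0 : 0 ≤ G) [IsFiniteMeasure (μ.withDensity fun x => ENNReal.ofReal (G x))] :
    Integrable G μ := by
  simpa using (integrable_withDensity_ofReal_iff hGm hG0).1 (integrable_const (1 : ℝ))

theorem integral_eq_one_of_isProbabilityMeasure_withDensity_ofReal {G : α → ℝ}
    (hGm : Measurable G) (hG0 : 0 ≤ G)
    [IsProbabilityMeasure (μ.withDensity fun x => ENNReal.ofReal (G x))] :
    ∫ x, G x ∂μ = 1 := by
  simpa using (integral_withDensity_ofReal (μ := μ) hGm hG0 fun _ => (1 : ℝ)).symm

theorem exists_measurable_le_withDensity_ofReal_eq (μ : Measure α) [SFinite μ] {p : α → ℝ}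
    (hp : 0 ≤ p) :
    ∃ G : α → ℝ, Measurable G ∧ 0 ≤ G ∧ G ≤ p ∧
      μ.withDensity (fun x => ENNReal.ofReal (G x)) =
        μ.withDensity (fun x => ENNReal.ofReal (p x)) := by
  obtain ⟨g, hgm, hgp, hg⟩ := exists_measurable_le_withDensity_eq μ fun x => ENNReal.ofReal (p x)
  have hg_ne_top : ∀ x, g x ≠ ∞ := fun x => ne_top_of_le_ne_top ofReal_ne_top (hgp x)
  refine ⟨fun x => (g x).toReal, hgm.ennreal_toReal, fun _ => toReal_nonneg, fun x => ?_, ?_⟩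
  · simpa [toReal_ofReal (hp x)] using toReal_mono ofReal_ne_top (hgp x)
  · simpa only [ofReal_toReal (hg_ne_top _)] using hg

theorem measure_eq_zero_of_withDensity_eq_of_ae_add_le {f g : α → ℝ≥0∞}
    [IsFiniteMeasure (μ.withDensity f)] (hfg : μ.withDensity g = μ.withDensity f)
    {s : Set α} (hs : MeasurableSet s) {δ : ℝ≥0∞} (hδ : δ ≠ 0)
    (h : ∀ᵐ x ∂μ.restrict s, g x + δ ≤ f x) : μ s = 0 := by
  have hfin : μ.withDensity g s ≠ ∞ := hfg ▸ measure_ne_top _ _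
  have hle : μ.withDensity g s + δ * μ s ≤ μ.withDensity g s + 0 :=
    calc μ.withDensity g s + δ * μ s = ∫⁻ x in s, (g x + δ) ∂μ := by
          rw [withDensity_apply _ hs, lintegral_add_right _ measurable_const, setLIntegral_const]
      _ ≤ ∫⁻ x in s, f x ∂μ := lintegral_mono_ae h
      _ = μ.withDensity g s + 0 := by rw [hfg, withDensity_apply _ hs, add_zero]
  have hδs : δ * μ s = 0 := nonpos_iff_eq_zero.1 (ENNReal.le_of_add_le_add_left hfin hle)
  exact (mul_eq_zero.1 hδs).resolve_left hδ

end Density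

theorem mul_log_sub_log_le_sub {a b : ℝ} (ha : 0 ≤ a) (hb : 0 < b) :
    a * (log b - log a) ≤ b - a := by
  rcases ha.eq_or_lt with rfl | ha
  · simpa using hb.le
  calc a * (log b - log a) = a * log (b / a) := by rw [log_div hb.ne' ha.ne']
    _ ≤ a * (b / a - 1) := mul_le_mul_of_nonneg_left (log_le_sub_one_of_pos (div_pos hb ha)) ha.le
    _ = b - a := by field_simp

theorem exists_pos_add_le_of_mul_log_add_le {ε : ℝ} (hε : 0 < ε) :
    ∃ δ > 0, ∀ a b : ℝ, 0 ≤ a → a ≤ b → b * log b + ε ≤ a * log a → a + δ ≤ b := by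
  obtain ⟨δ, hδ, hclose⟩ := Metric.uniformContinuousOn_iff.1
    ((isCompact_Icc (a := (0 : ℝ)) (b := 1)).uniformContinuousOn_of_continuous
      continuous_mul_log.continuousOn) ε hε
  refine ⟨δ, hδ, fun a b ha hab hgap => ?_⟩
  have ha1 : a ≤ 1 := by
    by_contra! h1
    have := mul_le_mul hab (log_le_log (by linarith) hab) (log_nonneg h1.le) (by linarith)
    linarith
  have hb1 : b ≤ 1 := by
    by_contra! h1
    have := mul_nonneg (ha.trans hab) (log_nonneg h1.le)
    have := mul_nonpos_of_nonneg_of_nonpos ha (log_nonpos ha ha1)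
    linarith
  by_contra! hlt
  have hnear := hclose a ⟨ha, ha1⟩ b ⟨ha.trans hab, hb1⟩
    (by rw [Real.dist_eq, abs_lt]; constructor <;> linarith)
  rw [Real.dist_eq, abs_lt] at hnear
  linarith [hnear.2]

section Entropy

variable {α : Type*} [MeasurableSpace α] {μ : Measure α}

theorem ae_mul_log_le_of_withDensity_eq {G p : α → ℝ} (hGm : Measurable G) (hG0 : 0 ≤ G)
    (hGp : G ≤ p)
    [IsFiniteMeasure (μ.withDensity fun x => ENNReal.ofReal (p x))]
    (hGP : μ.withDensity (fun x => ENNReal.ofReal (G x)) =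
      μ.withDensity (fun x => ENNReal.ofReal (p x)))
    (hplogp : AEStronglyMeasurable (fun x => p x * log (p x)) μ) :
    ∀ᵐ x ∂μ, G x * log (G x) ≤ p x * log (p x) := by
  set u := hplogp.mk _
  have hum : Measurable u := hplogp.stronglyMeasurable_mk.measurable
  have hgap : ∀ n : ℕ, ∀ᵐ x ∂μ, G x * log (G x) < u x + 1 / (n + 1) := by
    intro n
    set B := {x | u x + 1 / (n + 1) ≤ G x * log (G x)}
    have hB : MeasurableSet B :=
      measurableSet_le (hum.add_const _) (hGm.mul (measurable_log.comp hGm))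
    obtain ⟨δ, hδ, hsep⟩ := exists_pos_add_le_of_mul_log_add_le (Nat.one_div_pos_of_nat (n := n))
    have hB0 : μ B = 0 := by
      refine measure_eq_zero_of_withDensity_eq_of_ae_add_le hGP hB (ofReal_pos.2 hδ).ne' ?_
      filter_upwards [ae_restrict_mem hB, ae_restrict_of_ae hplogp.ae_eq_mk] with x hxB hx
      rw [← ofReal_add (hG0 x) hδ.le]
      exact ofReal_le_ofReal (hsep _ _ (hG0 x) (hGp x) (hx ▸ hxB))
    simpa [B, not_le] using measure_eq_zero_iff_ae_notMem.1 hB0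
  filter_upwards [ae_all_iff.2 hgap, hplogp.ae_eq_mk] with x hx hxu
  rw [hxu]
  refine le_of_forall_pos_lt_add fun ε hε => ?_
  obtain ⟨n, hn⟩ := exists_nat_one_div_lt hε
  linarith [hx n]

theorem neg_integral_mul_log_le_integral_neg_log [SFinite μ] {p q : α → ℝ} (hp : 0 ≤ p)
    [IsProbabilityMeasure (μ.withDensity fun x => ENNReal.ofReal (p x))]
    (hq : ∀ x, 0 < q x) (hq_int : Integrable q μ)
    (hq_le : ∫ x, q x ∂μ ≤ 1) (hplogp : Integrable (fun x => p x * log (p x)) μ)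
    (hcross : Integrable (fun x => -log (q x)) (μ.withDensity fun x => ENNReal.ofReal (p x))) :
    -∫ x, p x * log (p x) ∂μ ≤
      ∫ x, -log (q x) ∂μ.withDensity fun x => ENNReal.ofReal (p x) := by
  obtain ⟨G, hGm, hG0, hGp, hGP⟩ := exists_measurable_le_withDensity_ofReal_eq μ hp
  have hle := ae_mul_log_le_of_withDensity_eq hGm hG0 hGp hGP hplogp.1
  rw [← hGP] at hcross ⊢
  have : IsProbabilityMeasure (μ.withDensity fun x => ENNReal.ofReal (G x)) := hGP ▸ inferInstance
  rw [integrable_withDensity_ofReal_iff hGm hG0] at hcross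
  have hG_int := integrable_of_isFiniteMeasure_withDensity_ofReal (μ := μ) hGm hG0
  have hdiff : Integrable (fun x => q x - G x) μ := hq_int.sub hG_int
  have hG_one := integral_eq_one_of_isProbabilityMeasure_withDensity_ofReal (μ := μ) hGm hG0
  calc -∫ x, p x * log (p x) ∂μ = ∫ x, -(p x * log (p x)) ∂μ := (integral_neg _).symm
    _ ≤ ∫ x, (G x • -log (q x) + (q x - G x)) ∂μ := by
        refine integral_mono_ae hplogp.neg (hcross.add hdiff) ?_
        filter_upwards [hle] with x hx
        have := mul_log_sub_log_le_sub (hG0 x) (hq x)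
        rw [smul_eq_mul]
        linarith
    _ = ∫ x, G x • -log (q x) ∂μ + (∫ x, q x ∂μ - 1) := by
        rw [integral_add hcross hdiff, integral_sub hq_int hG_int, hG_one]
    _ ≤ ∫ x, -log (q x) ∂μ.withDensity fun x => ENNReal.ofReal (G x) := by
        rw [integral_withDensity_ofReal hGm hG0]
        linarith

end Entropy

theorem differential_entropy_mono_convex_order_logconcave_general
    {d : ℕ}
    (p₁ p₂ : EuclideanSpace ℝ (Fin d) → ℝ)
    (hp₁ : ∀ x, 0 ≤ p₁ x)
    (P₁ P₂ : Measure (EuclideanSpace ℝ (Fin d)))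
    (hP₁ : P₁ = MeasureTheory.volume.withDensity (fun x => ENNReal.ofReal (p₁ x)))
    (hP₂ : P₂ = MeasureTheory.volume.withDensity (fun x => ENNReal.ofReal (p₂ x)))
    [IsProbabilityMeasure P₁] [IsProbabilityMeasure P₂]
    (φ : EuclideanSpace ℝ (Fin d) → ℝ)
    (hφ : ConcaveOn ℝ Set.univ φ)
    (hlogconcave : ∀ x, p₂ x = Real.exp (φ x))
    (hcx : ∀ f : EuclideanSpace ℝ (Fin d) → ℝ, ConvexOn ℝ Set.univ f →
      Integrable f P₁ → Integrable f P₂ → ∫ x, f x ∂P₁ ≤ ∫ x, f x ∂P₂)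
    (hint₁ : Integrable (fun x => p₁ x * Real.log (p₁ x)) MeasureTheory.volume)
    (hint₂ : Integrable (fun x => p₂ x * Real.log (p₂ x)) MeasureTheory.volume)
    (hcross : Integrable (fun x => -Real.log (p₂ x)) P₁) :
    -(∫ x, p₁ x * Real.log (p₁ x)) ≤ -(∫ x, p₂ x * Real.log (p₂ x)) := by
  subst hP₁ hP₂
  have hp₂_pos : ∀ x, 0 < p₂ x := fun x => hlogconcave x ▸ exp_pos _
  have hp₂_nonneg : 0 ≤ p₂ := fun x => (hp₂_pos x).le
  have hp₂m : Measurable p₂ := by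
    rw [funext hlogconcave]
    exact (continuous_exp.comp (continuousOn_univ.1 (hφ.continuousOn isOpen_univ))).measurable
  have hconvex : ConvexOn ℝ univ fun x => -log (p₂ x) := by
    simp only [hlogconcave, log_exp]
    exact hφ.neg
  have hcross₂ :
      Integrable (fun x => -log (p₂ x)) (volume.withDensity fun x => .ofReal (p₂ x)) := by
    rw [integrable_withDensity_ofReal_iff hp₂m hp₂_nonneg]
    simpa using hint₂.neg
  calc -∫ x, p₁ x * log (p₁ x) ≤ ∫ x, -log (p₂ x) ∂volume.withDensity fun x => .ofReal (p₁ x) :=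
        neg_integral_mul_log_le_integral_neg_log hp₁ hp₂_pos
          (integrable_of_isFiniteMeasure_withDensity_ofReal hp₂m hp₂_nonneg)
          (integral_eq_one_of_isProbabilityMeasure_withDensity_ofReal hp₂m hp₂_nonneg).le
          hint₁ hcross
    _ ≤ ∫ x, -log (p₂ x) ∂volume.withDensity fun x => .ofReal (p₂ x) :=
        hcx _ hconvex hcross hcross₂
    _ = -∫ x, p₂ x * log (p₂ x) := by
        rw [integral_withDensity_ofReal hp₂m hp₂_nonneg, ← integral_neg]
        simp only [smul_eq_mul, mul_neg]

/-- If P₁ ≤_cx P₂ in the convex order and P₂ has a log-concave density p₂, then the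
differential entropies satisfy H(P₁) ≤ H(P₂), where H(P) = −∫ p log p. -/
theorem differential_entropy_mono_convex_order_logconcave
    {d : ℕ}
    (p₁ p₂ : EuclideanSpace ℝ (Fin d) → ℝ)
    (hp₁ : ∀ x, 0 ≤ p₁ x) (hp₂ : ∀ x, 0 ≤ p₂ x)
    (P₁ P₂ : Measure (EuclideanSpace ℝ (Fin d)))
    (hP₁ : P₁ = MeasureTheory.volume.withDensity (fun x => ENNReal.ofReal (p₁ x)))
    (hP₂ : P₂ = MeasureTheory.volume.withDensity (fun x => ENNReal.ofReal (p₂ x)))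
    [IsProbabilityMeasure P₁] [IsProbabilityMeasure P₂]
    (φ : EuclideanSpace ℝ (Fin d) → ℝ)
    (hφ : ConcaveOn ℝ Set.univ φ)
    (hlogconcave : ∀ x, p₂ x = Real.exp (φ x))
    (hcx : ∀ f : EuclideanSpace ℝ (Fin d) → ℝ, ConvexOn ℝ Set.univ f →
      Integrable f P₁ → Integrable f P₂ → ∫ x, f x ∂P₁ ≤ ∫ x, f x ∂P₂)
    (hint₁ : Integrable (fun x => p₁ x * Real.log (p₁ x)) MeasureTheory.volume)
    (hint₂ : Integrable (fun x => p₂ x * Real.log (p₂ x)) MeasureTheory.volume)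
    (hcross : Integrable (fun x => -Real.log (p₂ x)) P₁) :
    -(∫ x, p₁ x * Real.log (p₁ x)) ≤ -(∫ x, p₂ x * Real.log (p₂ x)) :=
  differential_entropy_mono_convex_order_logconcave_general p₁ p₂ hp₁ P₁ P₂ hP₁ hP₂ φ hφ hlogconcave
    hcx hint₁ hint₂ hcross
end

section
/- The squared-error scoring rule is not strictly epistemic-uncertainty detecting: there exists a non-Dirac second-order distribution Q with EU(Q) = 0. Specifically, for Q = (1/2)δ_{N(0,σ₁²)} + (1/2)δ_{N(0,σ₂²)} with σ₁² ≠ σ₂², the squared-error BMA epistemic uncertainty E_{P∼Q}[(E_{P̄}[Y'] − E_P[Y])²] equals 0 even though Q ≠ δ_P. -/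
open MeasureTheory ProbabilityTheory

lemma gauss_neg (v : NNReal) :
    (gaussianReal 0 v).map (fun x => -x) = gaussianReal 0 v := by
  have h := gaussianReal_map_const_mul (μ := 0) (v := v) (-1)
  simp only [neg_one_mul, mul_zero] at h
  convert h using 2
  ext
  norm_num

lemma sym_mean {μ : Measure ℝ} (h : μ.map (fun x => -x) = μ) :
    ∫ x, x ∂μ = 0 := by
  have h2 : ∫ x, x ∂μ = ∫ x, -x ∂μ := by
    conv_lhs => rw [← h]
    exact integral_map measurable_neg.aemeasurable aestronglyMeasurable_id
  rw [integral_neg] at h2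
  linarith

lemma gauss_mean (v : NNReal) : ∫ x, x ∂(gaussianReal 0 v) = 0 :=
  sym_mean (gauss_neg v)

lemma gauss_integrable (v : NNReal) : Integrable (fun x => x) (gaussianReal 0 v) := by
  by_cases hv : v = 0
  · rw [hv, gaussianReal_zero_var]
    have h0 : (fun x : ℝ => x) =ᵐ[Measure.dirac 0] fun _ => (0:ℝ) := by
      rw [MeasureTheory.ae_dirac_eq]; exact Filter.eventually_pure.mpr rfl
    exact (integrable_const (0:ℝ)).congr h0.symm
  · rw [gaussianReal_of_var_ne_zero 0 hv,
      integrable_withDensity_iff (measurable_gaussianPDF 0 v)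
        (Filter.Eventually.of_forall fun x => by
          rw [gaussianPDF_def]; exact ENNReal.ofReal_lt_top)]
    have hvpos : (0:ℝ) < (v:ℝ) := by positivity
    have hb : (0:ℝ) < ((2:ℝ) * v)⁻¹ := by positivity
    have h1 := (integrable_mul_exp_neg_mul_sq hb).const_mul (Real.sqrt (2 * Real.pi * v))⁻¹
    refine h1.congr (Filter.Eventually.of_forall fun x => ?_)
    show _ = x * (gaussianPDF 0 v x).toReal
    rw [gaussianPDF_def, ENNReal.toReal_ofReal (gaussianPDFReal_nonneg _ _ _),
      gaussianPDFReal_def]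
    simp only [sub_zero]
    rw [neg_div, div_eq_inv_mul]
    ring

lemma gaussianPDFReal_continuous (m : ℝ) (v : NNReal) :
    Continuous (gaussianPDFReal m v) := by
  rw [gaussianPDFReal_def]
  fun_prop

lemma gauss_inj {v w : NNReal} (h : gaussianReal 0 v = gaussianReal 0 w) : v = w := by
  by_cases hv : v = 0 <;> by_cases hw : w = 0
  · rw [hv, hw]
  · exfalso
    rw [hv, gaussianReal_zero_var, gaussianReal_of_var_ne_zero 0 hw] at h
    have h1 : Measure.dirac (0:ℝ) {0} = 1 := by simp
    rw [h, withDensity_apply _ (measurableSet_singleton 0),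
      setLIntegral_measure_zero _ _ (by simp)] at h1
    exact one_ne_zero h1.symm
  · exfalso
    rw [hw, gaussianReal_zero_var, gaussianReal_of_var_ne_zero 0 hv] at h
    have h1 : Measure.dirac (0:ℝ) {0} = 1 := by simp
    rw [← h, withDensity_apply _ (measurableSet_singleton 0),
      setLIntegral_measure_zero _ _ (by simp)] at h1
    exact one_ne_zero h1.symm
  · rw [gaussianReal_of_var_ne_zero 0 hv, gaussianReal_of_var_ne_zero 0 hw] at h
    have hae : gaussianPDF 0 v =ᵐ[volume] gaussianPDF 0 w :=
      (withDensity_eq_iff_of_sigmaFinite (measurable_gaussianPDF 0 v).aemeasurable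
        (measurable_gaussianPDF 0 w).aemeasurable).mp h
    have hae2 : gaussianPDFReal 0 v =ᵐ[volume] gaussianPDFReal 0 w := by
      filter_upwards [hae] with x hx
      simp only [gaussianPDF_def] at hx
      exact (ENNReal.ofReal_eq_ofReal_iff (gaussianPDFReal_nonneg _ _ _)
        (gaussianPDFReal_nonneg _ _ _)).mp hx
    have heq : gaussianPDFReal 0 v = gaussianPDFReal 0 w :=
      ((gaussianPDFReal_continuous 0 v).ae_eq_iff_eq volume
        (gaussianPDFReal_continuous 0 w)).mp hae2
    have h0 := congrFun heq 0
    rw [gaussianPDFReal_def, gaussianPDFReal_def] at h0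
    norm_num at h0
    rcases h0 with h0 | h0
    · exact h0
    · exact absurd h0 (by positivity)

/-- The set of measures with zero mean (expressed measurably) and finite first moment. -/
def meanZeroSet : Set (Measure ℝ) :=
  {p | (∫⁻ x, (‖x‖₊ : ENNReal) ∂p) ≠ ⊤ ∧
    (∫⁻ x, ENNReal.ofReal x ∂p).toReal - (∫⁻ x, ENNReal.ofReal (-x) ∂p).toReal = 0}

lemma meanZeroSet_measurableSet : MeasurableSet meanZeroSet := by
  have h1 : Measurable fun p : Measure ℝ => ∫⁻ x, (‖x‖₊ : ENNReal) ∂p :=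
    Measure.measurable_lintegral (measurable_id.nnnorm.coe_nnreal_ennreal)
  have h2 : Measurable fun p : Measure ℝ => ∫⁻ x, ENNReal.ofReal x ∂p :=
    Measure.measurable_lintegral (ENNReal.measurable_ofReal.comp measurable_id)
  have h3 : Measurable fun p : Measure ℝ => ∫⁻ x, ENNReal.ofReal (-x) ∂p :=
    Measure.measurable_lintegral (ENNReal.measurable_ofReal.comp measurable_neg)
  exact (h1 (measurableSet_singleton ⊤)).compl.inter
    (((h2.ennreal_toReal.sub h3.ennreal_toReal)) (measurableSet_singleton 0))

lemma mean_eq_zero_of_mem {p : Measure ℝ} (hp : p ∈ meanZeroSet) : ∫ x, x ∂p = 0 := by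
  have hint : Integrable (fun x => x) p :=
    ⟨measurable_id.aestronglyMeasurable, lt_top_iff_ne_top.mpr hp.1⟩
  rw [integral_eq_lintegral_pos_part_sub_lintegral_neg_part hint]
  exact hp.2

lemma gauss_mem_meanZeroSet (v : NNReal) : gaussianReal 0 v ∈ meanZeroSet := by
  have hint := gauss_integrable v
  constructor
  · exact lt_top_iff_ne_top.mp hint.2
  · rw [← integral_eq_lintegral_pos_part_sub_lintegral_neg_part hint]
    exact gauss_mean v

/-- The squared-error scoring rule is not strictly epistemic-uncertainty detecting:
for Q = (1/2)δ_{N(0,σ₁²)} + (1/2)δ_{N(0,σ₂²)} with σ₁² ≠ σ₂², the BMA epistemic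
uncertainty E_{P∼Q}[(μ_{P̄} − μ_P)²] equals 0 even though Q is not a Dirac measure. -/
theorem squared_error_eu_not_strict
    (v₁ v₂ : NNReal) (hv : v₁ ≠ v₂)
    (Q : Measure (Measure ℝ))
    (hQ : Q = (1/2 : ENNReal) • Measure.dirac (gaussianReal 0 v₁) +
              (1/2 : ENNReal) • Measure.dirac (gaussianReal 0 v₂))
    (Pbar : Measure ℝ)
    (hPbar : Pbar = (1/2 : ENNReal) • gaussianReal 0 v₁ +
                    (1/2 : ENNReal) • gaussianReal 0 v₂) :
    (∫ p, ((∫ y, y ∂Pbar) - ∫ y, y ∂p) ^ 2 ∂Q) = 0 ∧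
    ∀ P : Measure ℝ, Q ≠ Measure.dirac P := by
  have hPbarSym : Pbar.map (fun x => -x) = Pbar := by
    rw [hPbar, Measure.map_add _ _ measurable_neg, Measure.map_smul, Measure.map_smul,
      gauss_neg, gauss_neg]
  have hPbarMean : ∫ y, y ∂Pbar = 0 := sym_mean hPbarSym
  have hQnull : Q meanZeroSetᶜ = 0 := by
    rw [hQ, Measure.add_apply, Measure.smul_apply, Measure.smul_apply,
      Measure.dirac_apply' _ meanZeroSet_measurableSet.compl,
      Measure.dirac_apply' _ meanZeroSet_measurableSet.compl,
      Set.indicator_of_notMem (by simp [gauss_mem_meanZeroSet v₁]),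
      Set.indicator_of_notMem (by simp [gauss_mem_meanZeroSet v₂])]
    simp
  constructor
  · have hae : (fun p => ((∫ y, y ∂Pbar) - ∫ y, y ∂p) ^ 2) =ᵐ[Q] fun _ => (0:ℝ) := by
      rw [Filter.EventuallyEq, ae_iff]
      refine measure_mono_null (fun p hp => ?_) hQnull
      simp only [Set.mem_setOf_eq] at hp
      intro hmem
      exact hp (by rw [hPbarMean, mean_eq_zero_of_mem hmem]; ring)
    rw [integral_congr_ae hae, integral_zero]
  · intro P hQP
    have hne : gaussianReal 0 v₁ ≠ gaussianReal 0 v₂ := fun h => hv (gauss_inj h)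
    have hs : ∃ s : Set ℝ, MeasurableSet s ∧
        gaussianReal 0 v₁ s ≠ gaussianReal 0 v₂ s := by
      by_contra hc
      push_neg at hc
      exact hne (Measure.ext fun s hs => hc s hs)
    obtain ⟨s, hsm, hsne⟩ := hs
    set S : Set (Measure ℝ) := (fun μ : Measure ℝ => μ s) ⁻¹' {gaussianReal 0 v₁ s} with hS
    have hSm : MeasurableSet S :=
      Measure.measurable_coe hsm (measurableSet_singleton _)
    have hQS : Q S = 1/2 := by
      rw [hQ, Measure.add_apply, Measure.smul_apply, Measure.smul_apply,
        Measure.dirac_apply' _ hSm, Measure.dirac_apply' _ hSm,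
        Set.indicator_of_mem (by simp [hS]),
        Set.indicator_of_notMem (by simpa [hS] using hsne.symm)]
      simp
    rw [hQP, Measure.dirac_apply' _ hSm] at hQS
    by_cases hP : P ∈ S
    · rw [Set.indicator_of_mem hP] at hQS
      have h1 : (1:ENNReal) = 2⁻¹ := by simpa using hQS
      have := ENNReal.inv_eq_one.mp h1.symm
      norm_num at this
    · rw [Set.indicator_of_notMem hP] at hQS
      have h1 : (0:ENNReal) = 2⁻¹ := by simpa using hQS
      have := ENNReal.inv_eq_zero.mp h1.symm
      norm_num at this
end
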